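/- arXiv:1310.4915 — 3 statements merged into one kernel-verified Lean document; each statement's English description precedes it below -/
import Mathlib

section
/- Assume f₀,f₁,f₂,f₃ are linearly independent, and that the fiber π₂⁻¹(p) over a closed k-rational point p of coordinates (p₀:p₁:p₂:p₃) has dimension 1, with unmixed one-dimensional component defined by h_p ∈ S. Let ℓ_p be a linear form in x₀,…,x₃ with ℓ_p(p₀,…,p₃) = 1 and set ℓᵢ(x) := xᵢ − pᵢ·ℓ_p(x). Then h_p = gcd(ℓ₀(f),…,ℓ₃(f)), and I = (ℓ_p(f)) + h_p·(g₀,g₁,g₂,g₃) where the gᵢ ∈ S are defined by ℓᵢ(f) = h_p·gᵢ, and these satisfy ℓ_p(g₀,…,g₃) = 0. -/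
/-!
STATEMENT 7 (Lemma `1fiber`, first part):
Assume `f₀,…,f₃` are linearly independent (and have no common factor), and that the fiber
`π₂⁻¹(p)` over a closed `k`-rational point `p = (p₀:p₁:p₂:p₃)` has dimension 1, with
unmixed one-dimensional component defined by `h_p ∈ S`.  Let `ℓ_p` be a linear form with
`ℓ_p(p₀,…,p₃) = 1` and `ℓᵢ(x) := xᵢ − pᵢ·ℓ_p(x)`.  Then `h_p = gcd(ℓ₀(f),…,ℓ₃(f))`, and
`I = (ℓ_p(f)) + h_p·(g₀,…,g₃)` where `ℓᵢ(f) = h_p·gᵢ`, and `ℓ_p(g₀,…,g₃) = 0`.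
-/

open MvPolynomial

noncomputable section

abbrev S3 (k : Type) [Field k] := MvPolynomial (Fin 3) k
abbrev R4 (k : Type) [Field k] := MvPolynomial (Fin 4) k
/-- `T = S[x₀,…,x₃]`. -/
abbrev TT (k : Type) [Field k] := MvPolynomial (Fin 4) (S3 k)

variable (k : Type) [Field k]

/-- The graded maximal ideal `m = (s₀,s₁,s₂)` of `S`. -/
def mId : Ideal (S3 k) := Ideal.span {X 0, X 1, X 2}

/-- Saturation of an ideal of `S` with respect to `m`. -/
def satId (J : Ideal (S3 k)) : Ideal (S3 k) := ⨆ n : ℕ, Submodule.colon J (((mId k) ^ n : Ideal (S3 k)) : Set (S3 k))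

/-- Initial degree: the smallest degree of a nonzero homogeneous element. -/
def indeg (J : Ideal (S3 k)) : ℕ :=
  sInf {n | ∃ g ∈ J, g ≠ 0 ∧ MvPolynomial.IsHomogeneous g n}

/-- The defining equations of the fiber of `π₂ : Proj(𝒮_I) → ℙ³` over the `k`-rational
point of coordinates `pc = (p₀ : p₁ : p₂ : p₃)`: the specializations `∑ pᵢ gᵢ` at `pc` of
the syzygy forms `∑ gᵢ xᵢ` (where `∑ gᵢ fᵢ = 0`) defining the graph `Γ`. -/
def fibEqns (f : Fin 4 → S3 k) (pc : Fin 4 → k) : Set (S3 k) :=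
  {q | ∃ g : Fin 4 → S3 k, (∑ i, g i * f i) = 0 ∧ q = ∑ i, pc i • g i}

/-- `h` defines the unmixed (purely 1-dimensional) component of the fiber over `pc`, and
this fiber has dimension `1`:  `h` is a gcd of the defining equations of the fiber, and it
is a nonzero nonunit. -/
def IsUnmixedPartOfOneDimFiber (f : Fin 4 → S3 k) (pc : Fin 4 → k) (h : S3 k) : Prop :=
  h ≠ 0 ∧ ¬ IsUnit h ∧ (∀ q ∈ fibEqns k f pc, h ∣ q) ∧
    (∀ h' : S3 k, (∀ q ∈ fibEqns k f pc, h' ∣ q) → h' ∣ h)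

/-!
Since `ℓ_p(p) = 1`, every `fᵢ` equals `ℓᵢ(f) + pᵢ·ℓ_p(f)`; this gives the decomposition of `I`,
and `ℓ_p(ℓ₀(f),…,ℓ₃(f)) = 0` gives `ℓ_p(g) = 0` after cancelling `h_p`.  Each `ℓᵢ(f)` is the
specialisation at `p` of the syzygy `fᵢ·ℓ_p(x) − ℓ_p(f)·xᵢ`, so `h_p` divides it.  Conversely, if
`∑ gⱼ fⱼ = 0` then `(∑ pⱼ gⱼ)·ℓ_p(f) = −∑ gⱼ ℓⱼ(f)`, and a common divisor of the `ℓⱼ(f)` is prime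
to `ℓ_p(f)` because the `fᵢ` have no common factor; hence it divides every equation of the fiber,
and therefore divides `h_p`.
-/

section LinearForms

variable {R A ι : Type*} [CommRing R] [CommRing A] [Algebra R A]

theorem span_range_eq_span_singleton_sup_span_range_sub_smul (f : ι → A) (p : ι → R) (c : A)
    (hc : c ∈ Ideal.span (Set.range f)) :
    Ideal.span (Set.range f) =
      Ideal.span {c} ⊔ Ideal.span (Set.range fun i => f i - p i • c) := by
  refine le_antisymm (Ideal.span_le.2 ?_) (sup_le ?_ (Ideal.span_le.2 ?_))
  · rintro _ ⟨i, rfl⟩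
    rw [← sub_add_cancel (f i) (p i • c)]
    refine Ideal.add_mem _ (Ideal.mem_sup_right (Ideal.subset_span ⟨i, rfl⟩)) ?_
    rw [Algebra.smul_def]
    exact Ideal.mem_sup_left (Ideal.mul_mem_left _ _ (Ideal.mem_span_singleton_self c))
  · exact (Ideal.span_singleton_le_iff_mem _).2 hc
  · rintro _ ⟨i, rfl⟩
    simp only [SetLike.mem_coe, Algebra.smul_def]
    exact Ideal.sub_mem _ (Ideal.subset_span ⟨i, rfl⟩) (Ideal.mul_mem_left _ _ hc)

theorem isRelPrime_of_forall_dvd_sub_smul {f : ι → A} (hf : ∀ e : A, (∀ i, e ∣ f i) → IsUnit e)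
    {p : ι → R} {c e : A} (he : ∀ i, e ∣ f i - p i • c) : IsRelPrime e c := by
  refine fun u hue huc => hf u fun i => ?_
  rw [← sub_add_cancel (f i) (p i • c)]
  exact dvd_add (hue.trans (he i)) (by rw [Algebra.smul_def]; exact huc.mul_left _)

variable [Fintype ι]

theorem sum_smul_sub_smul_sum_smul_eq_zero (f : ι → A) {p a : ι → R} (ha : ∑ i, a i * p i = 1) :
    ∑ i, a i • (f i - p i • ∑ j, a j • f j) = 0 := by
  simp only [smul_sub, smul_smul, Finset.sum_sub_distrib, ← Finset.sum_smul, ha, one_smul,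
    sub_self]

theorem sum_smul_mem_span_range (f : ι → A) (a : ι → R) :
    ∑ j, a j • f j ∈ Ideal.span (Set.range f) :=
  Ideal.sum_mem _ fun j _ => by
    rw [Algebra.smul_def]; exact Ideal.mul_mem_left _ _ (Ideal.subset_span ⟨j, rfl⟩)

theorem exists_syzygy_sum_smul_eq_sub_smul (f : ι → A) {p a : ι → R}
    (ha : ∑ i, a i * p i = 1) (i : ι) :
    ∃ g : ι → A, ∑ j, g j * f j = 0 ∧ f i - p i • ∑ j, a j • f j = ∑ j, p j • g j := by
  classical
  set c := ∑ j, a j • f j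
  refine ⟨fun j => a j • f i - Pi.single (M := fun _ => A) i c j, ?_, ?_⟩
  · simp only [sub_mul, Finset.sum_sub_distrib, smul_mul_assoc, ← mul_smul_comm,
      ← Finset.mul_sum, Pi.single_apply, ite_mul, zero_mul, Finset.sum_ite_eq', Finset.mem_univ,
      if_true, c]
    ring
  · simp only [smul_sub, smul_smul, Finset.sum_sub_distrib, ← Finset.sum_smul,
      Pi.single_apply, smul_ite, smul_zero, Finset.sum_ite_eq', Finset.mem_univ, if_true]
    rw [Finset.sum_congr rfl fun j _ => mul_comm (p j) (a j), ha, one_smul]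

theorem sum_mul_sub_smul_eq_neg {f g : ι → A} (hg : ∑ j, g j * f j = 0) (p : ι → R) (c : A) :
    ∑ j, g j * (f j - p j • c) = -((∑ j, p j • g j) * c) := by
  simp only [mul_sub, mul_smul_comm, Finset.sum_sub_distrib, hg, Finset.sum_mul, smul_mul_assoc,
    zero_sub]

theorem dvd_sum_smul_of_syzygy [DecompositionMonoid A] {f g : ι → A}
    (hf : ∀ e : A, (∀ i, e ∣ f i) → IsUnit e) (hg : ∑ j, g j * f j = 0) {p : ι → R} {c e : A}
    (he : ∀ i, e ∣ f i - p i • c) : e ∣ ∑ j, p j • g j := by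
  refine (isRelPrime_of_forall_dvd_sub_smul hf he).dvd_of_dvd_mul_right ?_
  rw [← neg_neg ((∑ j, p j • g j) * c), ← sum_mul_sub_smul_eq_neg hg]
  exact (Finset.dvd_sum fun j _ => (he j).mul_left _).neg_right

end LinearForms

theorem stmt7_general (k : Type) [Field k] (f : Fin 4 → S3 k)
    -- the `fᵢ` are linearly independent and have no common factor
    (hcf : ∀ h : S3 k, (∀ i, h ∣ f i) → IsUnit h)
    -- the fiber over the point `pc` is 1-dimensional with unmixed component defined by `h`
    (pc : Fin 4 → k) (h : S3 k) (hfib : IsUnmixedPartOfOneDimFiber k f pc h)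
    -- a linear form `ℓ_p` with `ℓ_p(p₀,…,p₃) = 1`
    (a : Fin 4 → k) (ha : (∑ i, a i * pc i) = 1) :
    -- `h = gcd(ℓ₀(f),…,ℓ₃(f))`
    (∀ i, h ∣ (f i - pc i • (∑ j, a j • f j))) ∧
    (∀ h' : S3 k, (∀ i, h' ∣ (f i - pc i • (∑ j, a j • f j))) → h' ∣ h) ∧
    -- `I = (ℓ_p(f)) + h·(g₀,…,g₃)` with `ℓᵢ(f) = h·gᵢ` and `ℓ_p(g₀,…,g₃) = 0`
    (∀ g : Fin 4 → S3 k, (∀ i, f i - pc i • (∑ j, a j • f j) = h * g i) →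
      Ideal.span (Set.range f)
          = Ideal.span {∑ j, a j • f j} + Ideal.span (Set.range fun i => h * g i) ∧
        (∑ i, a i • g i) = 0) := by
  obtain ⟨hne, -, hdvd, hgcd⟩ := hfib
  have hℓ : ∀ i, f i - pc i • ∑ j, a j • f j ∈ fibEqns k f pc := fun i =>
    exists_syzygy_sum_smul_eq_sub_smul f ha i
  refine ⟨fun i => hdvd _ (hℓ i), fun e he => hgcd e ?_, fun g hg => ⟨?_, ?_⟩⟩
  · rintro _ ⟨g, hg, rfl⟩
    exact dvd_sum_smul_of_syzygy hcf hg he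
  · rw [Submodule.add_eq_sup, ← funext hg]
    exact span_range_eq_span_singleton_sup_span_range_sub_smul f pc _
      (sum_smul_mem_span_range f a)
  · refine (mul_eq_zero.1 ?_).resolve_left hne
    simp only [Finset.mul_sum, mul_smul_comm, ← hg, sum_smul_sub_smul_sum_smul_eq_zero f ha]

theorem stmt7 (k : Type) [Field k] (d : ℕ) (f : Fin 4 → S3 k)
    (hf : ∀ i, MvPolynomial.IsHomogeneous (f i) d)
    -- the `fᵢ` are linearly independent and have no common factor
    (hli : LinearIndependent k f)
    (hcf : ∀ h : S3 k, (∀ i, h ∣ f i) → IsUnit h)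
    -- the fiber over the point `pc` is 1-dimensional with unmixed component defined by `h`
    (pc : Fin 4 → k) (h : S3 k) (hfib : IsUnmixedPartOfOneDimFiber k f pc h)
    -- a linear form `ℓ_p` with `ℓ_p(p₀,…,p₃) = 1`
    (a : Fin 4 → k) (ha : (∑ i, a i * pc i) = 1) :
    -- `h = gcd(ℓ₀(f),…,ℓ₃(f))`
    (∀ i, h ∣ (f i - pc i • (∑ j, a j • f j))) ∧
    (∀ h' : S3 k, (∀ i, h' ∣ (f i - pc i • (∑ j, a j • f j))) → h' ∣ h) ∧
    -- `I = (ℓ_p(f)) + h·(g₀,…,g₃)` with `ℓᵢ(f) = h·gᵢ` and `ℓ_p(g₀,…,g₃) = 0`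
    (∀ g : Fin 4 → S3 k, (∀ i, f i - pc i • (∑ j, a j • f j) = h * g i) →
      Ideal.span (Set.range f)
          = Ideal.span {∑ j, a j • f j} + Ideal.span (Set.range fun i => h * g i) ∧
        (∑ i, a i • g i) = 0) :=
  stmt7_general k f hcf pc h hfib a ha

end
end

section
/- Assume f₀,f₁,f₂,f₃ are linearly independent, the fiber over a closed k-rational point p of coordinates (p₀:p₁:p₂:p₃) has dimension 1 with unmixed component defined by h_p ∈ S, and let ℓ_p be a linear form with ℓ_p(p₀,…,p₃) = 1, ℓᵢ(x) := xᵢ − pᵢ·ℓ_p(x), and gᵢ ∈ S with ℓᵢ(f) = h_p·gᵢ. Then (ℓ_p(f)) + h_p·(g₀,…,g₃)^sat ⊆ I^sat ⊆ (ℓ_p(f)) + (h_p). -/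
/-!
STATEMENT 8 (Lemma `1fiber`, second part):
With the hypotheses and notation of Lemma `1fiber` (`f₀,…,f₃` linearly independent with no
common factor, fiber over the `k`-rational point `p` of dimension 1 with unmixed component
defined by `h_p`, `ℓ_p` a linear form with `ℓ_p(p) = 1`, `ℓᵢ(x) = xᵢ − pᵢℓ_p(x)`, and
`gᵢ` with `ℓᵢ(f) = h_p·gᵢ`):
`(ℓ_p(f)) + h_p·(g₀,…,g₃)^sat ⊆ I^sat ⊆ (ℓ_p(f)) + (h_p)`.
-/

open MvPolynomial

noncomputable section

variable (k : Type) [Field k]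

/-!
Write `L = ℓ_p(f)`, so that `fᵢ = pᵢ L + h gᵢ`. Then `L ∈ I` and `h gᵢ ∈ I`, which gives the
first inclusion, since multiplying by `h` commutes with saturating. Conversely `I ⊆ (L, h)`, and
`h`, `L` are coprime because the `fᵢ` have no common factor. Two coprime polynomials in three
variables form a regular sequence, so `(L, h)` has no embedded component at the origin, i.e. it
is saturated. Concretely: if `q sᵢ^N = uᵢ L + vᵢ h` for `i = 0, 1, 2`, the `uᵢ` form, modulo `h`,
a Koszul cycle of `(s₀^N, s₁^N, s₂^N)`; it is a boundary, `uᵢ ≡ c sᵢ^N`, and then `q - c L ∈ (h)`.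
-/

open MvPolynomial

theorem IsRelPrime.dvd_of_dvd_mul_right_of_dvd_mul_right {α : Type*} [CommMonoidWithZero α]
    [IsCancelMulZero α] [DecompositionMonoid α] {a b h z : α} (hab : IsRelPrime a b)
    (ha : h ∣ z * a) (hb : h ∣ z * b) : h ∣ z := by
  obtain ⟨h₁, h₂, ⟨z', rfl⟩, h₂a, rfl⟩ := exists_dvd_and_dvd_of_dvd_mul ha
  rcases eq_or_ne h₁ 0 with rfl | hh₁
  · simp
  rw [mul_assoc, mul_dvd_mul_iff_left hh₁] at hb
  exact mul_dvd_mul_left h₁ ((hab.of_dvd_left h₂a).dvd_of_dvd_mul_right hb)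

namespace MvPolynomial

variable {σ R : Type*}

theorem isRelPrime_X_pow_X_pow [Field R] {i j : σ} (hij : i ≠ j) (m n : ℕ) :
    IsRelPrime (X i ^ m : MvPolynomial σ R) (X j ^ n) :=
  (X_prime.irreducible.isRelPrime_iff_not_dvd.mpr (by simpa using hij)).pow

theorem X_pow_mul_divMonomial_of_apply_eq_zero [CommSemiring R] {s : σ →₀ ℕ} {j : σ}
    (hs : s j = 0) (n : ℕ) (w : MvPolynomial σ R) :
    (X j ^ n * w).divMonomial s = X j ^ n * w.divMonomial s := by
  ext m
  have hle : Finsupp.single j n ≤ s + m ↔ Finsupp.single j n ≤ m := by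
    simp only [Finsupp.single_le_iff, Finsupp.add_apply, hs, zero_add]
  rw [coeff_divMonomial, X_pow_eq_monomial, coeff_monomial_mul', coeff_monomial_mul']
  split_ifs with h₁ h₂ h₂
  · rw [add_tsub_assoc_of_le h₂, coeff_divMonomial]
  · exact absurd (hle.mp h₁) h₂
  · exact absurd (hle.mpr h₂) h₁
  · rfl

theorem eq_of_X_pow_mul_add_X_pow_mul_eq [CommRing R] {i j l : σ} (hij : i ≠ j) (hil : i ≠ l)
    {N : ℕ} {w a b : MvPolynomial σ R} (h : X i ^ N * w + X l ^ N * b = X j ^ N * a) :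
    w = X j ^ N * a.divMonomial (Finsupp.single i N)
      - X l ^ N * b.divMonomial (Finsupp.single i N) := by
  have hdiv := congrArg (divMonomial · (Finsupp.single i N)) h
  have hi : (X i ^ N * w).divMonomial (Finsupp.single i N) = w := by
    rw [X_pow_eq_monomial]
    exact divMonomial_monomial_mul _ _
  rw [add_divMonomial, hi, X_pow_mul_divMonomial_of_apply_eq_zero (Finsupp.single_eq_of_ne' hil),
    X_pow_mul_divMonomial_of_apply_eq_zero (Finsupp.single_eq_of_ne' hij)] at hdiv
  linear_combination hdiv

end MvPolynomial

section

variable {k}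

theorem exists_dvd_sub_X_pow_mul_of_dvd_cross {h : S3 k} (hh : h ≠ 0) {N : ℕ}
    {u : Fin 3 → S3 k} (hu : ∀ i j, h ∣ X j ^ N * u i - X i ^ N * u j) :
    ∃ c, h ∣ u 0 - X 0 ^ N * c ∧ h ∣ u 1 - X 1 ^ N * c := by
  obtain ⟨w₀₁, hw₀₁⟩ := hu 0 1
  obtain ⟨w₀₂, hw₀₂⟩ := hu 0 2
  obtain ⟨w₁₂, hw₁₂⟩ := hu 1 2
  have hcycle : X 2 ^ N * w₀₁ + X 0 ^ N * w₁₂ = X 1 ^ N * w₀₂ :=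
    mul_left_cancel₀ hh (by linear_combination X 1 ^ N * hw₀₂ - X 0 ^ N * hw₁₂ - X 2 ^ N * hw₀₁)
  set t₀ := w₀₂.divMonomial (Finsupp.single 2 N)
  set t₁ := w₁₂.divMonomial (Finsupp.single 2 N)
  have hboundary : w₀₁ = X 1 ^ N * t₀ - X 0 ^ N * t₁ :=
    eq_of_X_pow_mul_add_X_pow_mul_eq (by decide) (by decide) hcycle
  have hrel : IsRelPrime (X 0 ^ N : S3 k) (X 1 ^ N) := isRelPrime_X_pow_X_pow (by decide) N N
  have key : X 1 ^ N * (u 0 - h * t₀) = X 0 ^ N * (u 1 - h * t₁) := by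
    linear_combination hw₀₁ + h * hboundary
  obtain ⟨c, hc⟩ : X 0 ^ N ∣ u 0 - h * t₀ := hrel.dvd_of_dvd_mul_left ⟨_, key⟩
  have hc' : u 1 - h * t₁ = X 1 ^ N * c :=
    mul_left_cancel₀ (pow_ne_zero N (X_ne_zero 0)) (by linear_combination X 1 ^ N * hc - key)
  exact ⟨c, ⟨t₀, by linear_combination hc⟩, ⟨t₁, by linear_combination hc'⟩⟩

theorem mem_span_pair_of_forall_mul_X_pow_mem {L h : S3 k} (hLh : IsRelPrime h L) {N : ℕ}
    {q : S3 k} (hq : ∀ i : Fin 3, q * X i ^ N ∈ Ideal.span {L, h}) : q ∈ Ideal.span {L, h} := by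
  rcases eq_or_ne h 0 with rfl | hh
  · rw [Ideal.eq_top_of_isUnit_mem _ (Ideal.subset_span (Set.mem_insert L _))
      (isRelPrime_zero_left.mp hLh)]
    exact Submodule.mem_top
  choose u v huv using fun i => Ideal.mem_span_pair.mp (hq i)
  have hcross : ∀ i j, h ∣ X j ^ N * u i - X i ^ N * u j := fun i j =>
    hLh.dvd_of_dvd_mul_right ⟨X i ^ N * v j - X j ^ N * v i, by
      linear_combination X j ^ N * huv i - X i ^ N * huv j⟩
  obtain ⟨c, ⟨t₀, ht₀⟩, ⟨t₁, ht₁⟩⟩ := exists_dvd_sub_X_pow_mul_of_dvd_cross hh hcross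
  have hrel : IsRelPrime (X 0 ^ N : S3 k) (X 1 ^ N) := isRelPrime_X_pow_X_pow (by decide) N N
  obtain ⟨r, hr⟩ : h ∣ q - c * L :=
    hrel.dvd_of_dvd_mul_right_of_dvd_mul_right
      ⟨t₀ * L + v 0, by linear_combination -huv 0 + L * ht₀⟩
      ⟨t₁ * L + v 1, by linear_combination -huv 1 + L * ht₁⟩
  exact Ideal.mem_span_pair.mpr ⟨c, r, by linear_combination -hr⟩

theorem X_mem_mId (i : Fin 3) : X i ∈ mId k :=
  Ideal.subset_span (by fin_cases i <;> simp)

theorem mem_satId_iff {J : Ideal (S3 k)} {q : S3 k} :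
    q ∈ satId k J ↔ ∃ n : ℕ, ∀ p ∈ mId k ^ n, q * p ∈ J := by
  have hdir : Directed (· ≤ ·) fun n : ℕ => J.colon ((mId k ^ n : Ideal (S3 k)) : Set (S3 k)) :=
    Monotone.directed_le fun _ _ hmn => Submodule.colon_mono le_rfl (Ideal.pow_le_pow_right hmn)
  simp only [satId, Submodule.mem_iSup_of_directed _ hdir, Submodule.mem_colon, smul_eq_mul,
    SetLike.mem_coe]

theorem le_satId (J : Ideal (S3 k)) : J ≤ satId k J := fun _ hq =>
  mem_satId_iff.mpr ⟨0, fun p _ => J.mul_mem_right p hq⟩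

theorem satId_mono {J J' : Ideal (S3 k)} (hJ : J ≤ J') : satId k J ≤ satId k J' := fun _ hq =>
  have ⟨n, hn⟩ := mem_satId_iff.mp hq
  mem_satId_iff.mpr ⟨n, fun p hp => hJ (hn p hp)⟩

theorem mul_satId_le (K J : Ideal (S3 k)) : K * satId k J ≤ satId k (K * J) :=
  Ideal.mul_le.mpr fun r hr s hs =>
    have ⟨n, hn⟩ := mem_satId_iff.mp hs
    mem_satId_iff.mpr ⟨n, fun p hp => mul_assoc r s p ▸ Ideal.mul_mem_mul hr (hn p hp)⟩

theorem satId_le_of_le {J J' : Ideal (S3 k)} (hJ : J ≤ J')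
    (hsat : ∀ (N : ℕ) (q : S3 k), (∀ i : Fin 3, q * X i ^ N ∈ J') → q ∈ J') :
    satId k J ≤ J' := fun q hq =>
  have ⟨n, hn⟩ := mem_satId_iff.mp hq
  hsat n q fun i => hJ (hn _ (Ideal.pow_mem_pow (X_mem_mId i) n))

end

theorem stmt8_general (k : Type) [Field k] (f : Fin 4 → S3 k)
    -- the `fᵢ` are linearly independent and have no common factor
    (hcf : ∀ h : S3 k, (∀ i, h ∣ f i) → IsUnit h)
    -- the fiber over the point `pc` is 1-dimensional with unmixed component defined by `h`
    (pc : Fin 4 → k) (h : S3 k)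
    -- a linear form `ℓ_p` with `ℓ_p(p₀,…,p₃) = 1`
    (a : Fin 4 → k)
    -- the `gᵢ`, defined by `ℓᵢ(f) = h·gᵢ`
    (g : Fin 4 → S3 k) (hg : ∀ i, f i - pc i • (∑ j, a j • f j) = h * g i) :
    Ideal.span {∑ j, a j • f j} + Ideal.span {h} * satId k (Ideal.span (Set.range g))
        ≤ satId k (Ideal.span (Set.range f)) ∧
      satId k (Ideal.span (Set.range f)) ≤ Ideal.span {∑ j, a j • f j} + Ideal.span {h} := by
  set L := ∑ j, a j • f j
  have hf : ∀ i, f i = C (pc i) * L + h * g i := fun i => by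
    rw [← hg i, smul_eq_C_mul]; ring
  have hLI : L ∈ Ideal.span (Set.range f) :=
    Ideal.sum_mem _ fun j _ => Submodule.smul_of_tower_mem _ _ (Ideal.subset_span ⟨j, rfl⟩)
  have hgI : Ideal.span {h} * Ideal.span (Set.range g) ≤ Ideal.span (Set.range f) := by
    rw [Ideal.span_mul_span', Ideal.span_le]
    rintro _ ⟨x, hx, _, ⟨i, rfl⟩, rfl⟩
    rw [Set.mem_singleton_iff.mp hx]
    change h * g i ∈ _
    exact hg i ▸ sub_mem (Ideal.subset_span ⟨i, rfl⟩) (Submodule.smul_of_tower_mem _ _ hLI)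
  have hIJ : Ideal.span (Set.range f) ≤ Ideal.span {L, h} := by
    rw [Ideal.span_le]
    rintro _ ⟨i, rfl⟩
    exact Ideal.mem_span_pair.mpr ⟨C (pc i), g i, by rw [hf i, mul_comm h]⟩
  have hLh : IsRelPrime h L := fun c hch hcL =>
    hcf c fun i => hf i ▸ dvd_add (hcL.mul_left _) (hch.mul_right _)
  rw [Ideal.add_eq_sup, Ideal.add_eq_sup, ← Ideal.span_insert]
  exact ⟨sup_le ((Ideal.span_singleton_le_iff_mem _).mpr (le_satId _ hLI))
      ((mul_satId_le _ _).trans (satId_mono hgI)),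
    satId_le_of_le hIJ fun _ _ => mem_span_pair_of_forall_mul_X_pow_mem hLh⟩

theorem stmt8 (k : Type) [Field k] (d : ℕ) (f : Fin 4 → S3 k)
    (hf : ∀ i, MvPolynomial.IsHomogeneous (f i) d)
    -- the `fᵢ` are linearly independent and have no common factor
    (hli : LinearIndependent k f)
    (hcf : ∀ h : S3 k, (∀ i, h ∣ f i) → IsUnit h)
    -- the fiber over the point `pc` is 1-dimensional with unmixed component defined by `h`
    (pc : Fin 4 → k) (h : S3 k) (hfib : IsUnmixedPartOfOneDimFiber k f pc h)
    -- a linear form `ℓ_p` with `ℓ_p(p₀,…,p₃) = 1`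
    (a : Fin 4 → k) (ha : (∑ i, a i * pc i) = 1)
    -- the `gᵢ`, defined by `ℓᵢ(f) = h·gᵢ`
    (g : Fin 4 → S3 k) (hg : ∀ i, f i - pc i • (∑ j, a j • f j) = h * g i) :
    Ideal.span {∑ j, a j • f j} + Ideal.span {h} * satId k (Ideal.span (Set.range g))
        ≤ satId k (Ideal.span (Set.range f)) ∧
      satId k (Ideal.span (Set.range f)) ≤ Ideal.span {∑ j, a j • f j} + Ideal.span {h} :=
  stmt8_general k f hcf pc h a g hg

end
end

section
/- Assume f₀,f₁,f₂,f₃ are linearly independent and have no common factor. If some fiber π₂⁻¹(p) over a closed k-rational point p has dimension 1 with unmixed component defined by h_p ∈ S, then V(I) ≠ ∅, and moreover d·deg(h_p) ≤ deg(I), where deg(I) denotes the degree of the finite scheme V(I). -/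
/-!
STATEMENT 9 (Remark `rem:NoBPfinite`):
Assume `f₀,…,f₃` (forms of degree `d` with `dim S/I ≤ 1`) are linearly independent and
have no common factor.  If some fiber `π₂⁻¹(p)` over a closed `k`-rational point `p` has
dimension 1 with unmixed component defined by `h_p ∈ S`, then `V(I) ≠ ∅` and moreover
`d·deg(h_p) ≤ deg(I)`, where `deg(I)` is the degree of the finite scheme `V(I)`.

`V(I) = ∅` would mean `m ⊆ √I`; `deg I` is rendered as the eventually constant value of
the Hilbert function of `S/I^sat`.
-/

open MvPolynomial

noncomputable section

variable (k : Type) [Field k]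

/-!
Choose `ℓ` with `pₗ ≠ 0` (at `p = 0` every fiber equation vanishes). The Koszul syzygies
`fⱼ eₗ - fₗ eⱼ` specialize to `pₗ fⱼ - pⱼ fₗ`, which are therefore divisible by `h`. Hence
`I ⊆ J := (fₗ, h)`, and `h, fₗ` are coprime because the `fᵢ` have no common factor. The complete intersection `J` is saturated, so `I^sat ⊆ J`, and in every
degree `ν ≥ d + δ` the Hilbert function of `S/J` is at least
`H(ν) - H(ν - d) - H(ν - δ) + H(ν - d - δ) = d δ`, where `H(n) = (n+1)(n+2)/2`. This bounds
`deg I` from below by `d δ > 0`; and if `V(I) = ∅`, then `S/J` would vanish in large degrees.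
-/

lemma Submodule.finrank_map_mkₐ_add_finrank_inf {K A : Type*} [Field K] [CommRing A]
    [Algebra K A] (I : Ideal A) (V : Submodule K A) [FiniteDimensional K V] :
    Module.finrank K (V.map (Ideal.Quotient.mkₐ K I).toLinearMap) +
      Module.finrank K ↥(V ⊓ I.restrictScalars K) = Module.finrank K V := by
  set T := (Ideal.Quotient.mkₐ K I).toLinearMap
  have hker : LinearMap.ker T = I.restrictScalars K := by
    ext; simp [T, Ideal.Quotient.eq_zero_iff_mem]
  rw [← LinearMap.finrank_range_add_finrank_ker (T.domRestrict V), LinearMap.range_domRestrict,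
    LinearMap.ker_domRestrict, ← Submodule.finrank_map_subtype_eq, Submodule.map_comap_subtype,
    hker]

lemma exists_cross_mul_eq {A : Type*} [CommRing A] [IsDomain A] [DecompositionMonoid A]
    {f h : A} (hrp : IsRelPrime h f) (hh0 : h ≠ 0) {g x y a b a' b' : A}
    (hx : a * f + b * h = g * x) (hy : a' * f + b' * h = g * y) :
    ∃ c, x * a' - y * a = h * c ∧ y * b - x * b' = f * c := by
  obtain ⟨c, hc⟩ : h ∣ x * a' - y * a := hrp.dvd_of_dvd_mul_right
    ⟨y * b - x * b', by linear_combination x * hy - y * hx⟩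
  refine ⟨c, hc, mul_left_cancel₀ hh0 ?_⟩
  linear_combination y * hx - x * hy + f * hc

namespace MvPolynomial

variable {σ R : Type*} [CommRing R]

section KillVar

variable [DecidableEq σ] {i j : σ}

noncomputable def killVar (i : σ) : MvPolynomial σ R →ₐ[R] MvPolynomial σ R :=
  aeval (Function.update X i 0)

@[simp] lemma killVar_X_self (i : σ) : killVar i (X i : MvPolynomial σ R) = 0 := by
  simp [killVar]

@[simp] lemma killVar_X_of_ne (h : j ≠ i) : killVar i (X j : MvPolynomial σ R) = X j := by
  simp [killVar, Function.update_of_ne h]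

lemma X_dvd_sub_killVar (i : σ) (p : MvPolynomial σ R) : X i ∣ p - killVar i p := by
  induction p using MvPolynomial.induction_on with
  | C a => simp [killVar, algebraMap_eq]
  | add p q hp hq => simpa [add_sub_add_comm] using dvd_add hp hq
  | mul_X p j hp =>
    by_cases hji : j = i
    · subst hji; simp
    · simpa [killVar_X_of_ne hji, ← sub_mul] using hp.mul_right (X j)

end KillVar

variable [IsDomain R] {i j l : σ}

lemma X_dvd_of_dvd_X_mul (hij : i ≠ j) {a : MvPolynomial σ R} (h : X i ∣ X j * a) :
    X i ∣ a :=
  (X_prime.dvd_or_dvd h).resolve_left (by simpa [X_dvd_X] using hij)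

lemma exists_koszul_boundary (hij : i ≠ j) (hil : i ≠ l) (hjl : j ≠ l)
    {a b c : MvPolynomial σ R} (h : X i * c - X j * b + X l * a = 0) :
    ∃ e u v, a = X j * e + X i * u ∧ b = X l * e + X i * v ∧ c = X j * v - X l * u := by
  classical
  have hkill : X l * killVar i a = X j * killVar i b := by
    have := congrArg (killVar i) h
    simp only [map_add, map_sub, map_mul, killVar_X_self, killVar_X_of_ne hij.symm,
      killVar_X_of_ne hil.symm, zero_mul, zero_sub, map_zero] at this
    linear_combination this
  obtain ⟨e, he⟩ := X_dvd_of_dvd_X_mul hjl ⟨_, hkill⟩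
  have he' : killVar i b = X l * e :=
    mul_left_cancel₀ (X_ne_zero j) (by rw [← hkill, he]; ring)
  obtain ⟨u, hu⟩ := X_dvd_sub_killVar i a
  obtain ⟨v, hv⟩ := X_dvd_sub_killVar i b
  have ha : a = X j * e + X i * u := by rw [← he]; linear_combination hu
  have hb : b = X l * e + X i * v := by rw [← he']; linear_combination hv
  refine ⟨e, u, v, ha, hb, mul_left_cancel₀ (X_ne_zero i) ?_⟩
  linear_combination h + X j * hb - X l * ha

lemma mem_span_pair_of_X_mul_mem [UniqueFactorizationMonoid R]
    (hij : i ≠ j) (hil : i ≠ l) (hjl : j ≠ l) {f h g : MvPolynomial σ R} (hh0 : h ≠ 0)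
    (hrp : IsRelPrime h f) (hi : g * X i ∈ Ideal.span {f, h}) (hj : g * X j ∈ Ideal.span {f, h})
    (hl : g * X l ∈ Ideal.span {f, h}) : g ∈ Ideal.span {f, h} := by
  obtain ⟨ai, bi, hi⟩ := Ideal.mem_span_pair.mp hi
  obtain ⟨aj, bj, hj⟩ := Ideal.mem_span_pair.mp hj
  obtain ⟨al, bl, hl⟩ := Ideal.mem_span_pair.mp hl
  obtain ⟨cij, haij, hbij⟩ := exists_cross_mul_eq hrp hh0 hi hj
  obtain ⟨cil, hail, -⟩ := exists_cross_mul_eq hrp hh0 hi hl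
  obtain ⟨cjl, hajl, -⟩ := exists_cross_mul_eq hrp hh0 hj hl
  -- The cross terms form a Koszul 2-cycle; its boundary corrects `aᵢ` and `bᵢ` into multiples
  -- of `X i`.
  obtain ⟨e, u, v, heij, -, -⟩ := exists_koszul_boundary hij hil hjl (a := cij) (b := cil)
    (c := cjl) (mul_left_cancel₀ hh0
      (by linear_combination -X i * hajl + X j * hail - X l * haij))
  obtain ⟨A, hA⟩ := X_dvd_of_dvd_X_mul hij (a := ai + h * e)
    ⟨aj - h * u, by linear_combination -haij - h * heij⟩
  obtain ⟨B, hB⟩ := X_dvd_of_dvd_X_mul hij (a := bi - f * e)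
    ⟨bj + f * u, by linear_combination hbij + f * heij⟩
  refine Ideal.mem_span_pair.mpr ⟨A, B, mul_right_cancel₀ (X_ne_zero i) ?_⟩
  linear_combination -f * hA - h * hB + hi

lemma homogeneousComponent_mul_of_isHomogeneous {σ R : Type*} [CommSemiring R]
    {g : MvPolynomial σ R} {m : ℕ} (hg : g.IsHomogeneous m) (u : MvPolynomial σ R) (n : ℕ) :
    homogeneousComponent (n + m) (u * g) = homogeneousComponent n u * g := by
  conv_lhs => rw [← sum_homogeneousComponent u, Finset.sum_mul, map_sum]
  have hterm : ∀ i, homogeneousComponent (n + m) (homogeneousComponent i u * g)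
      = if n = i then homogeneousComponent i u * g else 0 := fun i => by
    rw [homogeneousComponent_of_mem ((homogeneousComponent_isHomogeneous i u).mul hg)]
    simp
  rw [Finset.sum_congr rfl fun i _ => hterm i, Finset.sum_ite_eq]
  split_ifs with hn
  · rfl
  · rw [homogeneousComponent_eq_zero _ u (by simpa using hn), zero_mul]

instance {σ R : Type*} [CommSemiring R] [Finite σ] (n : ℕ) :
    Module.Finite R (homogeneousSubmodule σ R n) :=
  Module.Finite.of_fg (homogeneousSubmodule_fg σ R n)

lemma IsHomogeneous.mem_pow_idealOfVars {σ R : Type*} [CommSemiring R] {p : MvPolynomial σ R}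
    {n : ℕ} (hp : p.IsHomogeneous n) : p ∈ idealOfVars σ R ^ n :=
  (mem_pow_idealOfVars_iff n p).mpr fun x hx => by
    rw [Finsupp.degree_eq_weight_one]
    exact (hp (mem_support_iff.mp hx)).ge

variable {σ K : Type*} [Field K]

theorem finrank_homogeneousSubmodule [Fintype σ] (n : ℕ) :
    Module.finrank K (homogeneousSubmodule σ K n) = (Fintype.card σ + n - 1).choose n := by
  classical
  have hs : {d : σ →₀ ℕ | d.degree = n} =
      ↑(Finset.univ.finsuppAntidiag n : Finset (σ →₀ ℕ)) := by
    ext d; simp [Finset.mem_finsuppAntidiag, Finsupp.degree_eq_sum]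
  rw [homogeneousSubmodule_eq_finsupp_supported, hs,
    (AddMonoidAlgebra.supportedEquivFinsupp _).finrank_eq, Module.finrank_finsupp_self]
  simp [Finset.card_finsuppAntidiag_nat_eq_choose]

/-- In degree `a + d + δ`, the ideal `(f, h)` is the image of `S_{a+δ} ⊕ S_{a+d}` under
`(u, v) ↦ u f + v h`, whose kernel contains the Koszul syzygies `(t h, -t f)`, `t ∈ S_a`. -/
theorem finrank_add_finrank_le_of_le_span_pair [Finite σ] {f h : MvPolynomial σ K} {d δ a : ℕ}
    (hf : f.IsHomogeneous d) (hh : h.IsHomogeneous δ) (hh0 : h ≠ 0)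
    {W : Submodule K (MvPolynomial σ K)} (hW : W ≤ homogeneousSubmodule σ K (a + d + δ))
    (hWJ : W ≤ (Ideal.span {f, h}).restrictScalars K) :
    Module.finrank K W + Module.finrank K (homogeneousSubmodule σ K a) ≤
      Module.finrank K (homogeneousSubmodule σ K (a + δ)) +
        Module.finrank K (homogeneousSubmodule σ K (a + d)) := by
  set H₁ := homogeneousSubmodule σ K (a + δ)
  set H₂ := homogeneousSubmodule σ K (a + d)
  set Ha := homogeneousSubmodule σ K a
  let μ : H₁ × H₂ →ₗ[K] MvPolynomial σ K :=
    (LinearMap.mulRight K f ∘ₗ H₁.subtype ∘ₗ LinearMap.fst K H₁ H₂) +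
      (LinearMap.mulRight K h ∘ₗ H₂.subtype ∘ₗ LinearMap.snd K H₁ H₂)
  let ι : Ha →ₗ[K] H₁ × H₂ := LinearMap.prod
    (LinearMap.codRestrict H₁ (LinearMap.mulRight K h ∘ₗ Ha.subtype) fun t => t.2.mul hh)
    (LinearMap.codRestrict H₂ (-(LinearMap.mulRight K f ∘ₗ Ha.subtype))
      fun t => (t.2.mul hf).neg)
  have hWμ : W ≤ LinearMap.range μ := by
    intro g hg
    obtain ⟨u, v, huv⟩ := Ideal.mem_span_pair.mp (hWJ hg)
    refine ⟨(⟨homogeneousComponent (a + δ) u, homogeneousComponent_isHomogeneous _ u⟩,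
      ⟨homogeneousComponent (a + d) v, homogeneousComponent_isHomogeneous _ v⟩), ?_⟩
    have hδd : a + δ + d = a + d + δ := by ring
    simp only [μ, LinearMap.add_apply, LinearMap.comp_apply, LinearMap.fst_apply,
      LinearMap.snd_apply, Submodule.subtype_apply, LinearMap.mulRight_apply]
    rw [← homogeneousComponent_mul_of_isHomogeneous hf,
      ← homogeneousComponent_mul_of_isHomogeneous hh, hδd, ← map_add, huv,
      homogeneousComponent_eq_self (hW hg)]
  have hι : Function.Injective ι := fun t t' htt => Subtype.ext <| mul_right_cancel₀ hh0 <|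
    congrArg (fun x : H₁ × H₂ => (x.1 : MvPolynomial σ K)) htt
  have hιμ : LinearMap.range ι ≤ LinearMap.ker μ := by
    rintro _ ⟨t, rfl⟩
    change ((t : MvPolynomial σ K) * h) * f + (-((t : MvPolynomial σ K) * f)) * h = 0
    ring
  have hrank := LinearMap.finrank_range_add_finrank_ker μ
  rw [Module.finrank_prod] at hrank
  have h₁ : Module.finrank K W ≤ Module.finrank K (LinearMap.range μ) :=
    Submodule.finrank_mono hWμ
  have h₂ : Module.finrank K Ha ≤ Module.finrank K (LinearMap.ker μ) :=
    (LinearMap.finrank_range_of_inj hι).symm.le.trans (Submodule.finrank_mono hιμ)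
  omega

lemma IsHomogeneous.pos_of_not_isUnit {p : MvPolynomial σ K} {n : ℕ}
    (hp : p.IsHomogeneous n) (h0 : p ≠ 0) (hu : ¬ IsUnit p) : 0 < n := by
  refine Nat.pos_of_ne_zero fun hn => hu ?_
  subst hn
  rw [totalDegree_eq_zero_iff_eq_C.mp ((totalDegree_zero_iff_isHomogeneous σ).mpr hp)] at h0 ⊢
  exact (isUnit_iff_ne_zero.mpr fun hc => h0 (by rw [hc, map_zero])).map C

lemma pos_of_linearIndependent_of_isHomogeneous {ι : Type*} [Fintype σ] [Fintype ι]
    (hι : 1 < Fintype.card ι) {f : ι → MvPolynomial σ K} {d : ℕ}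
    (hli : LinearIndependent K f) (hf : ∀ i, (f i).IsHomogeneous d) : 0 < d := by
  refine Nat.pos_of_ne_zero fun hd => ?_
  subst hd
  have hli₀ : LinearIndependent K fun i => (⟨f i, hf i⟩ : homogeneousSubmodule σ K 0) :=
    LinearIndependent.of_comp (homogeneousSubmodule σ K 0).subtype hli
  have := hli₀.fintype_card_le_finrank
  rw [finrank_homogeneousSubmodule, Nat.choose_zero_right] at this
  omega

end MvPolynomial

variable {k}

lemma two_mul_finrank_homogeneousSubmodule_fin_three (n : ℕ) :
    2 * Module.finrank k (homogeneousSubmodule (Fin 3) k n) = (n + 1) * (n + 2) := by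
  rw [finrank_homogeneousSubmodule, Fintype.card_fin, show 3 + n - 1 = n + 2 by omega,
    Nat.choose_symm_add, Nat.choose_two_right, Nat.mul_div_cancel' (Nat.two_dvd_mul_sub_one _),
    show n + 2 - 1 = n + 1 by omega, mul_comm]

lemma mul_add_finrank_le_of_le_span_pair {f h : S3 k} {d δ ν : ℕ} (hf : f.IsHomogeneous d)
    (hh : h.IsHomogeneous δ) (hh0 : h ≠ 0) (hν : d + δ ≤ ν) {W : Submodule k (S3 k)}
    (hW : W ≤ homogeneousSubmodule (Fin 3) k ν)
    (hWJ : W ≤ (Ideal.span {f, h}).restrictScalars k) :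
    d * δ + Module.finrank k W ≤ Module.finrank k (homogeneousSubmodule (Fin 3) k ν) := by
  obtain ⟨a, rfl⟩ : ∃ a, ν = a + d + δ := ⟨ν - d - δ, by omega⟩
  have := finrank_add_finrank_le_of_le_span_pair hf hh hh0 hW hWJ
  have := two_mul_finrank_homogeneousSubmodule_fin_three (k := k) (a + d + δ)
  have := two_mul_finrank_homogeneousSubmodule_fin_three (k := k) (a + δ)
  have := two_mul_finrank_homogeneousSubmodule_fin_three (k := k) (a + d)
  have := two_mul_finrank_homogeneousSubmodule_fin_three (k := k) a
  have : (a + d + δ + 1) * (a + d + δ + 2) + (a + 1) * (a + 2) =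
      (a + δ + 1) * (a + δ + 2) + (a + d + 1) * (a + d + 2) + 2 * (d * δ) := by ring
  linarith

lemma mId_eq_idealOfVars : mId k = idealOfVars (Fin 3) k := by
  rw [mId, idealOfVars]
  congr 1
  ext p
  simp [Fin.exists_fin_succ, eq_comm]

lemma colon_mId_pow_span_pair {f h : S3 k} (hh0 : h ≠ 0) (hrp : IsRelPrime h f) (n : ℕ) :
    (Ideal.span {f, h}).colon ((mId k ^ n : Ideal (S3 k)) : Set (S3 k)) = Ideal.span {f, h} := by
  induction n with
  | zero => simp [Ideal.one_eq_top]
  | succ n ih =>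
    refine le_antisymm (fun g hg => ?_) Ideal.le_colon
    have hX (i : Fin 3) : g * X i ∈ Ideal.span {f, h} := by
      rw [← ih]
      refine Submodule.mem_colon.mpr fun p hp => ?_
      have hXp : X i * p ∈ mId k ^ (n + 1) := by
        rw [mId_eq_idealOfVars] at hp ⊢
        rw [pow_succ']
        exact Ideal.mul_mem_mul (Ideal.subset_span ⟨i, rfl⟩) hp
      simpa [mul_assoc] using Submodule.mem_colon.mp hg _ hXp
    exact mem_span_pair_of_X_mul_mem (i := 0) (j := 1) (l := 2) (by decide) (by decide)
      (by decide) hh0 hrp (hX 0) (hX 1) (hX 2)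

lemma satId_le_of_le_span_pair {I : Ideal (S3 k)} {f h : S3 k} (hh0 : h ≠ 0)
    (hrp : IsRelPrime h f) (hIJ : I ≤ Ideal.span {f, h}) : satId k I ≤ Ideal.span {f, h} :=
  iSup_le fun n =>
    (Submodule.colon_mono hIJ subset_rfl).trans (colon_mId_pow_span_pair hh0 hrp n).le

lemma sub_smul_mem_fibEqns (f : Fin 4 → S3 k) (pc : Fin 4 → k) (ℓ j : Fin 4) :
    pc ℓ • f j - pc j • f ℓ ∈ fibEqns k f pc := by
  refine ⟨Pi.single ℓ (f j) - Pi.single j (f ℓ), ?_, ?_⟩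
  · simp [mul_sub, Finset.sum_sub_distrib, Pi.single_apply, mul_comm]
  · simp [smul_sub, Pi.single_apply]

namespace IsUnmixedPartOfOneDimFiber

variable {f : Fin 4 → S3 k} {pc : Fin 4 → k} {h : S3 k}

lemma exists_ne_zero (hfib : IsUnmixedPartOfOneDimFiber k f pc h) : ∃ ℓ, pc ℓ ≠ 0 := by
  by_contra! hpc
  obtain ⟨hh0, hhu, -, hgcd⟩ := hfib
  obtain ⟨c, hc⟩ := hgcd (h * h) fun q ⟨g, _, hq⟩ => by simp [hq, hpc]
  exact hhu (IsUnit.of_mul_eq_one c (mul_left_cancel₀ hh0 (by linear_combination -hc)))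

lemma dvd_sub_smul (hfib : IsUnmixedPartOfOneDimFiber k f pc h) (ℓ j : Fin 4) :
    h ∣ pc ℓ • f j - pc j • f ℓ :=
  hfib.2.2.1 _ (sub_smul_mem_fibEqns f pc ℓ j)

lemma span_range_le_span_pair (hfib : IsUnmixedPartOfOneDimFiber k f pc h) {ℓ : Fin 4}
    (hℓ : pc ℓ ≠ 0) : Ideal.span (Set.range f) ≤ Ideal.span {f ℓ, h} := by
  rw [Ideal.span_le]
  rintro _ ⟨j, rfl⟩
  obtain ⟨t, ht⟩ := hfib.dvd_sub_smul ℓ j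
  have : pc ℓ • f j ∈ Ideal.span {f ℓ, h} := by
    rw [← sub_add_cancel (pc ℓ • f j) (pc j • f ℓ), ht]
    exact Ideal.add_mem _ (Ideal.mul_mem_right t _ (Ideal.subset_span (by simp)))
      (Submodule.smul_of_tower_mem _ _ (Ideal.subset_span (by simp)))
  simpa [inv_smul_smul₀ hℓ] using Submodule.smul_of_tower_mem _ (pc ℓ)⁻¹ this

lemma isRelPrime (hcf : ∀ h : S3 k, (∀ i, h ∣ f i) → IsUnit h)
    (hfib : IsUnmixedPartOfOneDimFiber k f pc h) {ℓ : Fin 4} (hℓ : pc ℓ ≠ 0) :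
    IsRelPrime h (f ℓ) := fun w hwh hwf => hcf w fun j => by
  have : w ∣ pc ℓ • f j := by
    rw [← sub_add_cancel (pc ℓ • f j) (pc j • f ℓ)]
    exact dvd_add (hwh.trans (hfib.dvd_sub_smul ℓ j)) (dvd_smul_of_dvd _ hwf)
  simpa [inv_smul_smul₀ hℓ] using dvd_smul_of_dvd (pc ℓ)⁻¹ this

end IsUnmixedPartOfOneDimFiber

theorem stmt9_general (k : Type) [Field k] (d : ℕ) (f : Fin 4 → S3 k)
    (hf : ∀ i, MvPolynomial.IsHomogeneous (f i) d)
    -- the `fᵢ` are linearly independent and have no common factor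
    (hli : LinearIndependent k f)
    (hcf : ∀ h : S3 k, (∀ i, h ∣ f i) → IsUnit h)
    -- the fiber over the `k`-rational point `pc` is 1-dimensional with unmixed component
    -- defined by `h`, a form of degree `δ`
    (pc : Fin 4 → k) (h : S3 k) (hfib : IsUnmixedPartOfOneDimFiber k f pc h)
    (δ : ℕ) (hδ : MvPolynomial.IsHomogeneous h δ)
    -- `e = deg I`, the degree of the finite scheme `V(I)`
    (e : ℕ)
    (he : ∃ n₁ : ℕ, ∀ ν ≥ n₁, Module.finrank k
      ((homogeneousSubmodule (Fin 3) k ν).map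
        (Ideal.Quotient.mkₐ k (satId k (Ideal.span (Set.range f)))).toLinearMap) = e) :
    -- `V(I) ≠ ∅`, i.e. `m ⊄ √I`
    ¬ (mId k ≤ (Ideal.span (Set.range f)).radical) ∧
    -- `d · deg h ≤ deg I`
    d * δ ≤ e := by
  obtain ⟨ℓ, hℓ⟩ := hfib.exists_ne_zero
  have hIJ := hfib.span_range_le_span_pair hℓ
  have hsat := satId_le_of_le_span_pair hfib.1 (hfib.isRelPrime hcf hℓ) hIJ
  have hdδ : 0 < d * δ := Nat.mul_pos (pos_of_linearIndependent_of_isHomogeneous (by simp) hli hf)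
    (hδ.pos_of_not_isUnit hfib.1 hfib.2.1)
  refine ⟨fun hm => ?_, ?_⟩
  · obtain ⟨n, hn⟩ := Ideal.exists_pow_le_of_le_radical_of_fg hm
      (Submodule.fg_span (Set.toFinite _))
    have hνJ : homogeneousSubmodule (Fin 3) k (n + d + δ) ≤
        (Ideal.span {f ℓ, h}).restrictScalars k := fun p hp =>
      hIJ (hn (Ideal.pow_le_pow_right (by omega)
        (mId_eq_idealOfVars (k := k) ▸ hp.mem_pow_idealOfVars)))
    have := mul_add_finrank_le_of_le_span_pair (hf ℓ) hδ hfib.1 (by omega) le_rfl hνJ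
    exact absurd this (not_le.mpr (Nat.lt_add_of_pos_left hdδ))
  · obtain ⟨n₁, hn₁⟩ := he
    rw [← hn₁ (n₁ + d + δ) (by omega), ← Nat.add_le_add_iff_right,
      Submodule.finrank_map_mkₐ_add_finrank_inf]
    exact mul_add_finrank_le_of_le_span_pair (hf ℓ) hδ hfib.1 (by omega) inf_le_left
      (inf_le_right.trans fun _ hx => hsat hx)

theorem stmt9 (k : Type) [Field k] (d : ℕ) (f : Fin 4 → S3 k)
    (hf : ∀ i, MvPolynomial.IsHomogeneous (f i) d)
    (hdim : ringKrullDim (S3 k ⧸ (Ideal.span (Set.range f) : Ideal (S3 k))) ≤ 1)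
    -- the `fᵢ` are linearly independent and have no common factor
    (hli : LinearIndependent k f)
    (hcf : ∀ h : S3 k, (∀ i, h ∣ f i) → IsUnit h)
    -- the fiber over the `k`-rational point `pc` is 1-dimensional with unmixed component
    -- defined by `h`, a form of degree `δ`
    (pc : Fin 4 → k) (h : S3 k) (hfib : IsUnmixedPartOfOneDimFiber k f pc h)
    (δ : ℕ) (hδ : MvPolynomial.IsHomogeneous h δ)
    -- `e = deg I`, the degree of the finite scheme `V(I)`
    (e : ℕ)
    (he : ∃ n₁ : ℕ, ∀ ν ≥ n₁, Module.finrank k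
      ((homogeneousSubmodule (Fin 3) k ν).map
        (Ideal.Quotient.mkₐ k (satId k (Ideal.span (Set.range f)))).toLinearMap) = e) :
    -- `V(I) ≠ ∅`, i.e. `m ⊄ √I`
    ¬ (mId k ≤ (Ideal.span (Set.range f)).radical) ∧
    -- `d · deg h ≤ deg I`
    d * δ ≤ e :=
  stmt9_general k d f hf hli hcf pc h hfib δ hδ e he

end
end
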